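/- For any ν > 1 and n ≥ 1, the sum over all nonempty subsets I of {1,…,n} of exp(-ν·λ(|I|)) is bounded by C_ν = 1/(e^{ν-1} - 1). That is, Σ_{s=1}^{n} C(n,s)·exp(-ν·s·log(e·n/s)) ≤ 1/(e^{ν-1} - 1). -/
import Mathlib


noncomputable def lam (n : ℕ) (s : ℝ) : ℝ := s * Real.log (Real.exp 1 * n / s)

theorem sum_exp_neg_nu_lam_le (n : ℕ) (hn : 1 ≤ n) (ν : ℝ) (hν : 1 < ν) :
    ∑ s ∈ Finset.Icc 1 n, (n.choose s : ℝ) * Real.exp (-ν * lam n s)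
      ≤ 1 / (Real.exp (ν - 1) - 1) := by
  set r : ℝ := Real.exp (-(ν - 1)) with hr
  have hr0 : 0 < r := Real.exp_pos _
  have hr1 : r < 1 := by
    rw [hr, Real.exp_lt_one_iff]; linarith
  have key : ∀ s ∈ Finset.Icc 1 n,
      (n.choose s : ℝ) * Real.exp (-ν * lam n s) ≤ r ^ s := by
    intro s hs
    rw [Finset.mem_Icc] at hs
    obtain ⟨hs1, hsn⟩ := hs
    have hs0 : (0:ℝ) < s := by exact_mod_cast hs1
    have hlog1 : (1:ℝ) ≤ Real.log (Real.exp 1 * n / s) := by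
      rw [Real.le_log_iff_exp_le (by positivity)]
      rw [mul_div_assoc, le_mul_iff_one_le_right (Real.exp_pos 1)]
      rw [le_div_iff₀ hs0]
      simpa using (Nat.cast_le (α := ℝ)).mpr hsn
    have hlam_ge : (s:ℝ) ≤ lam n s := by
      unfold lam
      nlinarith
    -- choose ≤ exp (lam n s)
    have hchoose : (n.choose s : ℝ) ≤ Real.exp (lam n s) := by
      have h1 : (n.choose s : ℝ) ≤ (n:ℝ) ^ s / (s.factorial) :=
        Nat.choose_le_pow_div s n
      have h2 : ((s:ℝ)) ^ s / (s.factorial) ≤ Real.exp s :=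
        Real.pow_div_factorial_le_exp _ hs0.le s
      have hfac : (0:ℝ) < ((s.factorial) : ℝ) := by exact_mod_cast Nat.factorial_pos s
      have h3 : (n:ℝ) ^ s / (s.factorial) ≤ (Real.exp 1 * n / s) ^ s := by
        rw [div_pow, mul_pow]
        rw [div_le_div_iff₀ hfac (by positivity)]
        calc (n:ℝ) ^ s * ((s:ℝ) ^ s) ≤ (n:ℝ) ^ s * (Real.exp s * (s.factorial)) := by
              gcongr
              rw [div_le_iff₀ hfac] at h2; linarith [h2]
          _ = Real.exp 1 ^ s * (n:ℝ) ^ s * (s.factorial) := by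
              rw [Real.exp_one_pow]
              ring
      have h4 : (Real.exp 1 * n / s) ^ s = Real.exp (lam n s) := by
        unfold lam
        rw [← Real.rpow_natCast (Real.exp 1 * n / s) s,
          Real.rpow_def_of_pos (by positivity)]
        ring_nf
      calc (n.choose s : ℝ) ≤ (n:ℝ) ^ s / (s.factorial) := h1
        _ ≤ (Real.exp 1 * n / s) ^ s := h3
        _ = Real.exp (lam n s) := h4
    calc (n.choose s : ℝ) * Real.exp (-ν * lam n s)
        ≤ Real.exp (lam n s) * Real.exp (-ν * lam n s) := by
          gcongr
        _ = Real.exp ((1 - ν) * lam n s) := by rw [← Real.exp_add]; ring_nf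
        _ ≤ Real.exp ((1 - ν) * s) := by
          apply Real.exp_le_exp.mpr
          apply mul_le_mul_of_nonpos_left hlam_ge (by linarith)
        _ = r ^ s := by
          rw [hr, ← Real.exp_nat_mul]; ring_nf
  have hsum : ∑ s ∈ Finset.Icc 1 n, (n.choose s : ℝ) * Real.exp (-ν * lam n s)
      ≤ ∑ s ∈ Finset.Icc 1 n, r ^ s := Finset.sum_le_sum key
  have hgeom : ∑ s ∈ Finset.Icc 1 n, r ^ s ≤ r / (1 - r) := by
    have : Finset.Icc 1 n = Finset.Ico 1 (n + 1) := by
      rw [Finset.Ico_add_one_right_eq_Icc]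
    rw [this, geom_sum_Ico' hr1.ne (by omega)]
    rw [div_le_div_iff₀ (by linarith) (by linarith)]
    have : (0:ℝ) < r ^ (n+1) := by positivity
    nlinarith
  have hfinal : r / (1 - r) = 1 / (Real.exp (ν - 1) - 1) := by
    rw [hr, Real.exp_neg]
    have he : (0:ℝ) < Real.exp (ν - 1) := Real.exp_pos _
    field_simp
  linarith [hsum, hgeom, hfinal.le]
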